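/- In Simon's reinforcement model with memory parameter p ∈ (0,1): for every γ ∈ (1, 1/p) there exists a constant c > 0 such that for every integer j ≥ 1 the process ( (c + N_j(k))^γ / k )_{k ≥ j} is a supermartingale with respect to the filtration F_k = σ(ε_i, V_i : 2 ≤ i ≤ k); consequently E[ (c + N_j(n))^γ ] ≤ (c+1)^γ · n/j for all n ≥ j. -/

import Mathlib

open MeasureTheory ProbabilityTheory Filter
open scoped ENNReal

/-- The index process of Simon's reinforcement model: `I_1 = 1` and, for `i ≥ 2`,
`I_i = i` if `ε_i = 0` and `I_i = I_{V_i}` if `ε_i = 1` (a.s. `V_i ∈ {1,…,i−1}`;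
the `min` below is the identity on that event and merely guarantees termination). -/
def simonIdx {Ω : Type*} (ε V : ℕ → Ω → ℕ) (ω : Ω) : ℕ → ℕ
  | 0 => 0
  | 1 => 1
  | i + 2 =>
      if ε (i + 2) ω = 0 then i + 2
      else simonIdx ε V ω (min (V (i + 2) ω) (i + 1))
  decreasing_by exact Nat.lt_succ_of_le (min_le_right _ _)

/-- The counting process `N_j(k) = card{1 ≤ i ≤ k : I_i = j}` of Simon's model. -/
def simonN {Ω : Type*} (ε V : ℕ → Ω → ℕ) (j k : ℕ) (ω : Ω) : ℕ :=
  ((Finset.Icc 1 k).filter (fun i => simonIdx ε V ω i = j)).card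

/-- The filtration `F_k = σ(ε_i, V_i : 2 ≤ i ≤ k)` of Simon's reinforcement model. -/
def simonFiltration {Ω : Type*} (ε V : ℕ → Ω → ℕ) (k : ℕ) : MeasurableSpace Ω :=
  ⨆ i ∈ Set.Icc 2 k, MeasurableSpace.comap (fun ω => (ε i ω, V i ω)) inferInstance

section Aux
variable {Ω : Type*} (ε V : ℕ → Ω → ℕ)

lemma simonIdx_le (ω : Ω) : ∀ m, simonIdx ε V ω m ≤ m := by
  intro m
  induction m using Nat.strong_induction_on with
  | _ m ih =>
    match m with
    | 0 => simp [simonIdx]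
    | 1 => simp [simonIdx]
    | i + 2 =>
      rw [simonIdx]
      split
      · exact le_rfl
      · exact le_trans (ih _ (Nat.lt_succ_of_le (min_le_right _ _)))
          (le_trans (min_le_right _ _) (by omega))

lemma simonN_succ (j k : ℕ) (ω : Ω) :
    simonN ε V j (k + 1) ω
      = simonN ε V j k ω + (if simonIdx ε V ω (k + 1) = j then 1 else 0) := by
  unfold simonN
  rw [show Finset.Icc 1 (k+1) = insert (k+1) (Finset.Icc 1 k) by
    ext x; simp [Finset.mem_Icc]; omega]
  rw [Finset.filter_insert]
  split
  · rw [Finset.card_insert_of_notMem (by simp)]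
  · omega

lemma simonN_self_le (j : ℕ) (ω : Ω) : simonN ε V j j ω ≤ 1 := by
  unfold simonN
  refine le_trans (Finset.card_le_card (fun i hi => ?_)) (Finset.card_singleton j).le
  simp only [Finset.mem_filter, Finset.mem_Icc] at hi
  have := simonIdx_le ε V ω i
  simp only [Finset.mem_singleton]
  omega

end Aux

section Meas
variable {Ω : Type*} [MeasurableSpace Ω] {ε V : ℕ → Ω → ℕ}

lemma simonFiltration_le (hε : ∀ i, Measurable (ε i)) (hV : ∀ i, Measurable (V i)) (k : ℕ) :
    simonFiltration ε V k ≤ ‹MeasurableSpace Ω› := by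
  refine iSup₂_le fun i _ => ?_
  exact MeasurableSpace.comap_le_iff_le_map.mpr
    (Measurable.le_map ((hε i).prodMk (hV i)))

lemma simonFiltration_mono {k l : ℕ} (hkl : k ≤ l) :
    simonFiltration ε V k ≤ simonFiltration ε V l := by
  refine iSup₂_le fun i hi => ?_
  exact le_iSup₂_of_le i ⟨hi.1, hi.2.trans hkl⟩ le_rfl

lemma measurable_pair_F {i k : ℕ} (h2 : 2 ≤ i) (hik : i ≤ k) :
    Measurable[simonFiltration ε V k] (fun ω => (ε i ω, V i ω)) := by
  have : MeasurableSpace.comap (fun ω => (ε i ω, V i ω)) inferInstance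
      ≤ simonFiltration ε V k := le_iSup₂_of_le i ⟨h2, hik⟩ le_rfl
  exact (measurable_iff_comap_le.mpr le_rfl).mono this le_rfl

lemma measurable_eps_F {i k : ℕ} (h2 : 2 ≤ i) (hik : i ≤ k) :
    Measurable[simonFiltration ε V k] (ε i) :=
  (measurable_fst.comp (measurable_pair_F h2 hik) : _)

lemma measurable_V_F {i k : ℕ} (h2 : 2 ≤ i) (hik : i ≤ k) :
    Measurable[simonFiltration ε V k] (V i) :=
  (measurable_snd.comp (measurable_pair_F h2 hik) : _)

lemma measurable_simonIdx_F {k : ℕ} :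
    ∀ m, m ≤ k → Measurable[simonFiltration ε V k] (fun ω => simonIdx ε V ω m) := by
  intro m
  induction m using Nat.strong_induction_on with
  | _ m ih =>
    intro hmk
    match m with
    | 0 => simpa [simonIdx] using measurable_const
    | 1 => simpa [simonIdx] using measurable_const
    | i + 2 =>
      have heq : (fun ω => simonIdx ε V ω (i + 2))
          = fun ω => if ε (i + 2) ω = 0 then (i + 2 : ℕ)
              else ∑ l ∈ Finset.range (i + 2),
                if min (V (i + 2) ω) (i + 1) = l then simonIdx ε V ω l else 0 := by
        funext ω
        rw [simonIdx]
        split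
        · rfl
        · rw [Finset.sum_ite_eq (Finset.range (i + 2)) (min (V (i + 2) ω) (i + 1))
            (fun l => simonIdx ε V ω l)]
          rw [if_pos (Finset.mem_range.mpr (Nat.lt_succ_of_le (min_le_right _ _)))]
      rw [heq]
      have hVm : Measurable[simonFiltration ε V k] (fun ω => min (V (i + 2) ω) (i + 1)) :=
        (measurable_V_F (by omega) hmk).min measurable_const
      refine Measurable.ite ?_ measurable_const (Finset.measurable_sum _ fun l hl => ?_)
      · exact (measurable_eps_F (by omega) hmk) (measurableSet_singleton 0)
      · refine Measurable.ite (hVm (measurableSet_singleton l)) ?_ measurable_const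
        exact ih l (by simpa using hl) (by simp at hl; omega)

lemma measurable_simonN_F {j k k' : ℕ} (hk : k' ≤ k) :
    Measurable[simonFiltration ε V k] (fun ω => simonN ε V j k' ω) := by
  have : (fun ω => simonN ε V j k' ω)
      = fun ω => ∑ i ∈ Finset.Icc 1 k', if simonIdx ε V ω i = j then 1 else 0 := by
    funext ω
    simpa [simonN] using (Finset.card_filter _ _)
  rw [this]
  refine Finset.measurable_sum _ fun i hi => ?_
  refine Measurable.ite ?_ measurable_const measurable_const
  exact (measurable_simonIdx_F i (le_trans (by simp at hi; omega) hk))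
    (measurableSet_singleton j)

end Meas

section Analytic

lemma rpow_mvt {γ : ℝ} (hγ : 1 ≤ γ) {x : ℝ} (hx : 0 < x) :
    (x + 1) ^ γ - x ^ γ ≤ γ * (x + 1) ^ (γ - 1) := by
  have hlt : x < x + 1 := by linarith
  have hcont : ContinuousOn (fun y : ℝ => y ^ γ) (Set.Icc x (x + 1)) := by
    intro y hy
    exact (Real.continuousAt_rpow_const y γ (Or.inl (by linarith [hy.1]))).continuousWithinAt
  have hdiff : DifferentiableOn ℝ (fun y : ℝ => y ^ γ) (Set.Ioo x (x + 1)) := by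
    intro y hy
    have hy0 : y ≠ 0 := by have := hy.1; intro h; rw [h] at this; linarith
    exact (Real.hasDerivAt_rpow_const (Or.inl hy0)).differentiableAt.differentiableWithinAt
  obtain ⟨ξ, hξ, hderiv⟩ := exists_deriv_eq_slope (fun y : ℝ => y ^ γ) hlt hcont hdiff
  have hξ0 : 0 < ξ := lt_trans hx hξ.1
  have hd : deriv (fun y : ℝ => y ^ γ) ξ = γ * ξ ^ (γ - 1) :=
    (Real.hasDerivAt_rpow_const (Or.inl hξ0.ne')).deriv
  rw [hd] at hderiv
  have hden : (x + 1 - x : ℝ) = 1 := by ring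
  rw [hden, div_one] at hderiv
  rw [← hderiv]
  have h1 : ξ ^ (γ - 1) ≤ (x + 1) ^ (γ - 1) :=
    Real.rpow_le_rpow hξ0.le hξ.2.le (by linarith)
  have hγ0 : (0:ℝ) ≤ γ := by linarith
  nlinarith [h1]

lemma simon_key_ineq {p γ : ℝ} (hp : 0 < p) (hγ : 1 < γ) (hpγ : p * γ < 1) :
    ∃ c : ℝ, 0 < c ∧ ∀ t : ℝ, 0 ≤ t →
      p * t * ((c + t + 1) ^ γ - (c + t) ^ γ) ≤ (c + t) ^ γ := by
  have hpγ0 : 0 < p * γ := by positivity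
  have hγ1 : (0:ℝ) < γ - 1 := by linarith
  set δ : ℝ := (p * γ) ^ (-(γ - 1)⁻¹) with hδdef
  have hδ1 : 1 < δ := by
    rw [hδdef]
    refine (Real.one_lt_rpow_iff_of_pos hpγ0).mpr (Or.inr ⟨hpγ, ?_⟩)
    rw [neg_lt, neg_zero]; positivity
  have hδ0 : 0 < δ := lt_trans one_pos hδ1
  have hδpow : δ ^ (γ - 1) = (p * γ)⁻¹ := by
    rw [hδdef, ← Real.rpow_mul hpγ0.le]
    rw [show (-(γ - 1)⁻¹ * (γ - 1)) = -1 by field_simp]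
    rw [Real.rpow_neg_one]
  have hδ1' : (0:ℝ) < δ - 1 := by linarith
  refine ⟨(δ - 1)⁻¹, inv_pos.mpr hδ1', fun t ht => ?_⟩
  set c : ℝ := (δ - 1)⁻¹ with hcdef
  have hc0 : 0 < c := inv_pos.mpr hδ1'
  have hct : 0 < c + t := by linarith
  -- step 1 : MVT bound
  have h1 : (c + t + 1) ^ γ - (c + t) ^ γ ≤ γ * (c + t + 1) ^ (γ - 1) := rpow_mvt hγ.le hct
  -- step 2 : c + t + 1 ≤ δ * (c + t)
  have h2 : c + t + 1 ≤ δ * (c + t) := by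
    have hcδ : c * (δ - 1) = 1 := by
      rw [hcdef]; exact inv_mul_cancel₀ hδ1'.ne'
    nlinarith [ht, hδ1]
  -- step 3
  have h3 : (c + t + 1) ^ (γ - 1) ≤ (p * γ)⁻¹ * (c + t) ^ (γ - 1) := by
    calc (c + t + 1) ^ (γ - 1) ≤ (δ * (c + t)) ^ (γ - 1) :=
          Real.rpow_le_rpow (by linarith) h2 (by linarith)
      _ = δ ^ (γ - 1) * (c + t) ^ (γ - 1) := Real.mul_rpow hδ0.le hct.le
      _ = (p * γ)⁻¹ * (c + t) ^ (γ - 1) := by rw [hδpow]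
  have h4 : (c + t) ^ γ = (c + t) ^ (γ - 1) * (c + t) := by
    rw [← Real.rpow_add_one hct.ne' (γ - 1)]
    ring_nf
  have h5 : (0:ℝ) ≤ (c + t) ^ (γ - 1) := Real.rpow_nonneg hct.le _
  have h6 : p * t * ((c + t + 1) ^ γ - (c + t) ^ γ) ≤ p * t * (γ * (c + t + 1) ^ (γ - 1)) := by
    apply mul_le_mul_of_nonneg_left h1 (by positivity)
  calc p * t * ((c + t + 1) ^ γ - (c + t) ^ γ)
      ≤ p * t * (γ * (c + t + 1) ^ (γ - 1)) := h6
    _ ≤ p * t * (γ * ((p * γ)⁻¹ * (c + t) ^ (γ - 1))) := by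
        apply mul_le_mul_of_nonneg_left (mul_le_mul_of_nonneg_left h3 (by linarith)) (by positivity)
    _ = t * (c + t) ^ (γ - 1) := by field_simp
    _ ≤ (c + t) * (c + t) ^ (γ - 1) := by nlinarith [h5]
    _ = (c + t) ^ γ := by rw [h4]; ring

end Analytic

section Indep
variable {Ω : Type*} [MeasurableSpace Ω] {P : Measure Ω} [IsProbabilityMeasure P]
  {ε V : ℕ → Ω → ℕ}

lemma simon_indep (hεmeas : ∀ i, Measurable (ε i)) (hVmeas : ∀ i, Measurable (V i))
    (hindep : iIndepFun
      (fun (q : ℕ × Bool) ω => if q.2 then ε q.1 ω else V q.1 ω) P) (k : ℕ) :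
    Indep (simonFiltration ε V k)
      (MeasurableSpace.comap (fun ω => (ε (k + 1) ω, V (k + 1) ω)) inferInstance) P := by
  classical
  set f : ℕ × Bool → Ω → ℕ := fun q ω => if q.2 then ε q.1 ω else V q.1 ω with hf
  have hf_meas : ∀ q, Measurable (f q) := by
    rintro ⟨i, b⟩
    cases b
    · simpa [hf] using hVmeas i
    · simpa [hf] using hεmeas i
  set S : Finset (ℕ × Bool) := (Finset.Icc 2 k) ×ˢ (Finset.univ : Finset Bool) with hS
  set T : Finset (ℕ × Bool) := {(k + 1, true), (k + 1, false)} with hT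
  have hST : Disjoint S T := by
    rw [Finset.disjoint_left]
    rintro ⟨i, b⟩ haS haT
    simp only [hS, hT, Finset.mem_product, Finset.mem_Icc, Finset.mem_insert,
      Finset.mem_singleton, Prod.mk.injEq] at haS haT
    omega
  have hIF : IndepFun (fun a (i : S) => f i a) (fun a (i : T) => f i a) P :=
    hindep.indepFun_finset S T hST hf_meas
  rw [IndepFun_iff_Indep] at hIF
  -- key sub-σ-algebra comparisons
  have hcoord : ∀ (W : Finset (ℕ × Bool)) (q : ℕ × Bool) (hq : q ∈ W),
      MeasurableSpace.comap (f q) inferInstance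
        ≤ MeasurableSpace.comap (fun a (i : W) => f i a) MeasurableSpace.pi := by
    intro W q hq
    have : f q = (fun g : W → ℕ => g ⟨q, hq⟩) ∘ (fun a (i : W) => f i a) := rfl
    rw [this, ← MeasurableSpace.comap_comp]
    exact MeasurableSpace.comap_mono (measurable_iff_comap_le.mp (measurable_pi_apply _))
  have hpair : ∀ (W : Finset (ℕ × Bool)) (i : ℕ) (h1 : (i, true) ∈ W) (h2 : (i, false) ∈ W),
      MeasurableSpace.comap (fun ω => (ε i ω, V i ω)) inferInstance
        ≤ MeasurableSpace.comap (fun a (q : W) => f q a) MeasurableSpace.pi := by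
    intro W i h1 h2
    have hprod : (inferInstance : MeasurableSpace (ℕ × ℕ))
        = MeasurableSpace.comap Prod.fst inferInstance
            ⊔ MeasurableSpace.comap Prod.snd inferInstance := rfl
    rw [hprod, MeasurableSpace.comap_sup, MeasurableSpace.comap_comp,
      MeasurableSpace.comap_comp]
    refine sup_le ?_ ?_
    · have : (Prod.fst ∘ fun ω => (ε i ω, V i ω)) = f (i, true) := rfl
      rw [this]; exact hcoord W _ h1
    · have : (Prod.snd ∘ fun ω => (ε i ω, V i ω)) = f (i, false) := rfl
      rw [this]; exact hcoord W _ h2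
  have hleft : simonFiltration ε V k
      ≤ MeasurableSpace.comap (fun a (i : S) => f i a) MeasurableSpace.pi := by
    refine iSup₂_le fun i hi => ?_
    exact hpair S i (by simp [hS, Finset.mem_product]; exact hi)
      (by simp [hS, Finset.mem_product]; exact hi)
  have hright : MeasurableSpace.comap (fun ω => (ε (k + 1) ω, V (k + 1) ω)) inferInstance
      ≤ MeasurableSpace.comap (fun a (i : T) => f i a) MeasurableSpace.pi :=
    hpair T (k + 1) (by simp [hT]) (by simp [hT])
  exact indep_of_indep_of_le_left (indep_of_indep_of_le_right hIF hright) hleft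

lemma simon_indepFun {k : ℕ} {φ ψ : Ω → ℝ}
    (hIndep : Indep (simonFiltration ε V k)
      (MeasurableSpace.comap (fun ω => (ε (k + 1) ω, V (k + 1) ω)) inferInstance) P)
    (hφ : Measurable[simonFiltration ε V k] φ)
    (hψ : Measurable[MeasurableSpace.comap (fun ω => (ε (k + 1) ω, V (k + 1) ω))
      inferInstance] ψ) :
    IndepFun φ ψ P := by
  rw [IndepFun_iff_Indep]
  exact indep_of_indep_of_le_left
    (indep_of_indep_of_le_right hIndep (measurable_iff_comap_le.mp hψ))
    (measurable_iff_comap_le.mp hφ)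

end Indep

section More
variable {Ω : Type*} (ε V : ℕ → Ω → ℕ)

lemma simonN_le (j k : ℕ) (ω : Ω) : simonN ε V j k ω ≤ k := by
  unfold simonN
  calc ((Finset.Icc 1 k).filter _).card ≤ (Finset.Icc 1 k).card := Finset.card_filter_le _ _
    _ = k := by rw [Nat.card_Icc]; omega

lemma simonIdx_succ_eq {k : ℕ} (hk : 1 ≤ k) (ω : Ω) :
    simonIdx ε V ω (k + 1)
      = if ε (k + 1) ω = 0 then k + 1
        else simonIdx ε V ω (min (V (k + 1) ω) k) := by
  obtain ⟨n, rfl⟩ : ∃ n, k = n + 1 := ⟨k - 1, by omega⟩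
  rw [simonIdx]

end More

section Helpers
variable {Ω : Type*} [MeasurableSpace Ω] {P : Measure Ω} [IsProbabilityMeasure P]

lemma measurable_rpow_const' {m : MeasurableSpace Ω} {f : Ω → ℝ} (hf : Measurable[m] f)
    (γ : ℝ) : Measurable[m] fun ω => f ω ^ γ := by
  measurability

lemma bdd_integrable {f : Ω → ℝ} (hf : AEStronglyMeasurable f P) {C : ℝ}
    (hC : ∀ ω, |f ω| ≤ C) : Integrable f P :=
  (integrable_const C).mono' hf (Filter.Eventually.of_forall fun ω => by
    simpa [Real.norm_eq_abs] using hC ω)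

variable {ε V : ℕ → Ω → ℕ}

lemma simon_V_ae (hVmeas : ∀ i, Measurable (V i))
    (hVlaw : ∀ i, 2 ≤ i → ∀ j ∈ Finset.Icc 1 (i - 1),
      P {ω | V i ω = j} = ((i - 1 : ℕ) : ℝ≥0∞)⁻¹)
    {k : ℕ} (hk : 1 ≤ k) : ∀ᵐ ω ∂P, V (k + 1) ω ∈ Finset.Icc 1 k := by
  have hmeasm : ∀ m : ℕ, MeasurableSet {ω | V (k + 1) ω = m} := fun m =>
    (hVmeas (k + 1)) (measurableSet_singleton m)
  set U : Set Ω := ⋃ m ∈ Finset.Icc 1 k, {ω | V (k + 1) ω = m} with hU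
  have hUmeas : MeasurableSet U := Finset.measurableSet_biUnion _ fun m _ => hmeasm m
  have hdisj : Set.PairwiseDisjoint (↑(Finset.Icc 1 k))
      (fun m => {ω | V (k + 1) ω = m}) := by
    intro a _ b _ hab
    refine Set.disjoint_left.mpr fun ω ha hb => ?_
    exact hab (ha.symm.trans hb)
  have hPU : P U = 1 := by
    rw [hU, measure_biUnion_finset hdisj fun m _ => hmeasm m]
    have : ∀ m ∈ Finset.Icc 1 k, P {ω | V (k + 1) ω = m} = ((k : ℕ) : ℝ≥0∞)⁻¹ := by
      intro m hm
      have h2 : 2 ≤ k + 1 := by omega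
      have := hVlaw (k + 1) h2 m (by simpa using hm)
      simpa using this
    rw [Finset.sum_congr rfl this, Finset.sum_const, Nat.card_Icc]
    simp only [nsmul_eq_mul]
    rw [show k + 1 - 1 = k from rfl]
    rw [ENNReal.mul_inv_cancel (by simp; omega) (by simp)]
  have : {ω | V (k + 1) ω ∈ Finset.Icc 1 k} = U := by
    ext ω; simp [hU]
  rw [Filter.eventually_iff]
  rw [show {ω | V (k + 1) ω ∈ Finset.Icc 1 k} = U from this]
  rw [mem_ae_iff, ← prob_compl_eq_zero_iff hUmeas] at *
  exact hPU

lemma simon_pair_prob (hεmeas : ∀ i, Measurable (ε i)) (hVmeas : ∀ i, Measurable (V i))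
    (hindep : iIndepFun
      (fun (q : ℕ × Bool) ω => if q.2 then ε q.1 ω else V q.1 ω) P)
    {p : ℝ}
    (hεlaw : ∀ i, 2 ≤ i → P {ω | ε i ω = 1} = ENNReal.ofReal p)
    (hVlaw : ∀ i, 2 ≤ i → ∀ j ∈ Finset.Icc 1 (i - 1),
      P {ω | V i ω = j} = ((i - 1 : ℕ) : ℝ≥0∞)⁻¹)
    {k m : ℕ} (hk : 1 ≤ k) (hm : m ∈ Finset.Icc 1 k) :
    P {ω | ε (k + 1) ω = 1 ∧ V (k + 1) ω = m}
      = ENNReal.ofReal p * ((k : ℕ) : ℝ≥0∞)⁻¹ := by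
  have hne : ((k + 1, true) : ℕ × Bool) ≠ (k + 1, false) := by simp
  have hIF : IndepFun (ε (k + 1)) (V (k + 1)) P := by
    have := hindep.indepFun hne
    simpa using this
  have h1 : {ω | ε (k + 1) ω = 1 ∧ V (k + 1) ω = m}
      = (ε (k + 1) ⁻¹' {1}) ∩ (V (k + 1) ⁻¹' {m}) := by
    ext ω; simp [Set.mem_preimage]
  have h2 : P ((ε (k + 1) ⁻¹' {1}) ∩ (V (k + 1) ⁻¹' {m}))
      = P (ε (k + 1) ⁻¹' {1}) * P (V (k + 1) ⁻¹' {m}) :=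
    hIF.measure_inter_preimage_eq_mul _ _ (measurableSet_singleton 1)
      (measurableSet_singleton m)
  rw [h1, h2]
  have hε' : P (ε (k + 1) ⁻¹' {1}) = ENNReal.ofReal p := by
    rw [show ε (k + 1) ⁻¹' {1} = {ω | ε (k + 1) ω = 1} from rfl]
    exact hεlaw (k + 1) (by omega)
  have hV' : P (V (k + 1) ⁻¹' {m}) = ((k : ℕ) : ℝ≥0∞)⁻¹ := by
    rw [show V (k + 1) ⁻¹' {m} = {ω | V (k + 1) ω = m} from rfl]
    have := hVlaw (k + 1) (by omega) m (by simpa using hm)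
    simpa using this
  rw [hε', hV']

end Helpers

section Main
variable {Ω : Type*} [MeasurableSpace Ω] {P : Measure Ω} [IsProbabilityMeasure P]
  {ε V : ℕ → Ω → ℕ}

lemma simon_step (hεmeas : ∀ i, Measurable (ε i)) (hVmeas : ∀ i, Measurable (V i))
    (hεval : ∀ i ω, ε i ω ≤ 1)
    {p : ℝ} (hp : p ∈ Set.Ioo (0 : ℝ) 1)
    (hεlaw : ∀ i, 2 ≤ i → P {ω | ε i ω = 1} = ENNReal.ofReal p)
    (hVlaw : ∀ i, 2 ≤ i → ∀ j ∈ Finset.Icc 1 (i - 1),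
      P {ω | V i ω = j} = ((i - 1 : ℕ) : ℝ≥0∞)⁻¹)
    (hindep : iIndepFun
      (fun (q : ℕ × Bool) ω => if q.2 then ε q.1 ω else V q.1 ω) P)
    {γ c : ℝ} (hγ1 : 1 < γ) (hc : 0 < c)
    (hkey : ∀ t : ℝ, 0 ≤ t → p * t * ((c + t + 1) ^ γ - (c + t) ^ γ) ≤ (c + t) ^ γ)
    {j k : ℕ} (hj : 1 ≤ j) (hjk : j ≤ k) :
    P[(fun ω => (c + (simonN ε V j (k + 1) ω : ℝ)) ^ γ / ((k : ℝ) + 1))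
        | simonFiltration ε V k]
      ≤ᵐ[P] fun ω => (c + (simonN ε V j k ω : ℝ)) ^ γ / (k : ℝ) := by
  classical
  have hk : 1 ≤ k := le_trans hj hjk
  have hm : simonFiltration ε V k ≤ ‹MeasurableSpace Ω› := simonFiltration_le hεmeas hVmeas k
  have hK1 : (1 : ℝ) ≤ (k : ℝ) := by exact_mod_cast hk
  have hK0 : (0 : ℝ) < (k : ℝ) := lt_of_lt_of_le one_pos hK1
  set Nf : Ω → ℝ := fun ω => (simonN ε V j k ω : ℝ) with hNf
  have hN0 : ∀ ω, 0 ≤ Nf ω := fun ω => Nat.cast_nonneg _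
  have hNK : ∀ ω, Nf ω ≤ (k : ℝ) := fun ω => Nat.cast_le.mpr (simonN_le ε V j k ω)
  set F1 : Ω → ℝ := fun ω => (c + Nf ω) ^ γ with hF1
  set Δf : Ω → ℝ := fun ω => (c + Nf ω + 1) ^ γ - (c + Nf ω) ^ γ with hΔf
  set φ : ℕ → Ω → ℝ := fun m ω => if simonIdx ε V ω m = j then Δf ω else 0 with hφ
  set ψ : ℕ → Ω → ℝ := fun m ω =>
    if ε (k + 1) ω = 1 ∧ V (k + 1) ω = m then (1 : ℝ) else 0 with hψ
  set f2 : Ω → ℝ := fun ω => (c + (simonN ε V j (k + 1) ω : ℝ)) ^ γ / ((k : ℝ) + 1) with hf2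
  set g : Ω → ℝ := fun ω => (F1 ω + (p / (k : ℝ)) * (Nf ω * Δf ω)) / ((k : ℝ) + 1) with hg
  set B : ℝ := (c + (k : ℝ) + 1) ^ γ with hB
  have hB0 : 0 ≤ B := Real.rpow_nonneg (by linarith) _
  -- measurability
  have hNmeas : Measurable[simonFiltration ε V k] Nf :=
    measurable_from_top.comp (measurable_simonN_F le_rfl)
  have hF1meas : Measurable[simonFiltration ε V k] F1 :=
    measurable_rpow_const' (measurable_const.add hNmeas) γ
  have hΔmeas : Measurable[simonFiltration ε V k] Δf :=
    (measurable_rpow_const' ((measurable_const.add hNmeas).add measurable_const) γ).sub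
      hF1meas
  have hφmeas : ∀ m, m ≤ k → Measurable[simonFiltration ε V k] (φ m) := fun m hmk =>
    Measurable.ite ((measurable_simonIdx_F m hmk) (measurableSet_singleton j)) hΔmeas
      measurable_const
  have hψmeasG : ∀ m, Measurable[MeasurableSpace.comap
      (fun ω => (ε (k + 1) ω, V (k + 1) ω)) inferInstance] (ψ m) := by
    intro m
    have hset : MeasurableSet[MeasurableSpace.comap
        (fun ω => (ε (k + 1) ω, V (k + 1) ω)) inferInstance]
        {ω | ε (k + 1) ω = 1 ∧ V (k + 1) ω = m} := by
      refine ⟨{(1, m)}, measurableSet_singleton _, ?_⟩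
      ext ω; simp [Prod.ext_iff]
    exact Measurable.ite hset measurable_const measurable_const
  have hψmeas : ∀ m, Measurable (ψ m) := by
    intro m
    have hset : MeasurableSet {ω | ε (k + 1) ω = 1 ∧ V (k + 1) ω = m} := by
      have h := ((hεmeas (k + 1)) (measurableSet_singleton 1)).inter
        ((hVmeas (k + 1)) (measurableSet_singleton m))
      exact h
    exact Measurable.ite hset measurable_const measurable_const
  -- bounds
  have hF1bdd : ∀ ω, |F1 ω| ≤ B := by
    intro ω
    rw [abs_of_nonneg (Real.rpow_nonneg (by linarith [hN0 ω]) _)]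
    exact Real.rpow_le_rpow (by linarith [hN0 ω]) (by linarith [hNK ω]) (by linarith)
  have hΔ0 : ∀ ω, 0 ≤ Δf ω := by
    intro ω
    have h := Real.rpow_le_rpow (show (0:ℝ) ≤ c + Nf ω by linarith [hN0 ω])
      (show c + Nf ω ≤ c + Nf ω + 1 by linarith) (show (0:ℝ) ≤ γ by linarith)
    simp only [hΔf]; linarith
  have hΔbdd : ∀ ω, |Δf ω| ≤ B := by
    intro ω
    rw [abs_of_nonneg (hΔ0 ω)]
    have h1 : (c + Nf ω + 1) ^ γ ≤ B :=
      Real.rpow_le_rpow (by linarith [hN0 ω]) (by linarith [hNK ω]) (by linarith)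
    have h2 : 0 ≤ (c + Nf ω) ^ γ := Real.rpow_nonneg (by linarith [hN0 ω]) _
    simp only [hΔf]; linarith
  have hφbdd : ∀ m ω, |φ m ω| ≤ B := by
    intro m ω
    simp only [hφ]
    split
    · exact hΔbdd ω
    · simpa using hB0
  have hψbdd : ∀ m ω, |ψ m ω| ≤ 1 := by
    intro m ω; simp only [hψ]; split <;> simp
  -- integrability
  have hF1int : Integrable F1 P :=
    bdd_integrable ((hF1meas.mono hm le_rfl).aestronglyMeasurable) hF1bdd
  have hφint : ∀ m, m ≤ k → Integrable (φ m) P := fun m hmk =>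
    bdd_integrable (((hφmeas m hmk).mono hm le_rfl).aestronglyMeasurable) (hφbdd m)
  have hψint : ∀ m, Integrable (ψ m) P := fun m =>
    bdd_integrable ((hψmeas m).aestronglyMeasurable) (hψbdd m)
  -- a.e. decomposition of f2
  have hV1k : ∀ᵐ ω ∂P, V (k + 1) ω ∈ Finset.Icc 1 k := simon_V_ae hVmeas hVlaw hk
  have hdecomp : ∀ ω, V (k + 1) ω ∈ Finset.Icc 1 k →
      (c + (simonN ε V j (k + 1) ω : ℝ)) ^ γ
        = F1 ω + ∑ m ∈ Finset.Icc 1 k, ψ m ω * φ m ω := by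
    intro ω hV
    have hIdx : simonIdx ε V ω (k + 1)
        = if ε (k + 1) ω = 0 then k + 1 else simonIdx ε V ω (min (V (k + 1) ω) k) :=
      simonIdx_succ_eq ε V hk ω
    have hNsucc := simonN_succ ε V j k ω
    by_cases hε0 : ε (k + 1) ω = 0
    · have hidx : simonIdx ε V ω (k + 1) = k + 1 := by rw [hIdx, if_pos hε0]
      have hne : ¬ (simonIdx ε V ω (k + 1) = j) := by omega
      rw [if_neg hne, add_zero] at hNsucc
      have hsum : ∑ m ∈ Finset.Icc 1 k, ψ m ω * φ m ω = 0 := by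
        refine Finset.sum_eq_zero fun m hm => ?_
        simp [hψ, hε0]
      rw [hNsucc, hsum, add_zero]
    · have hε1 : ε (k + 1) ω = 1 := by have := hεval (k + 1) ω; omega
      simp only [Finset.mem_Icc] at hV
      have hmin : min (V (k + 1) ω) k = V (k + 1) ω := min_eq_left (by omega)
      have hIdx' : simonIdx ε V ω (k + 1) = simonIdx ε V ω (V (k + 1) ω) := by
        rw [hIdx, if_neg hε0, hmin]
      have hsum : ∑ m ∈ Finset.Icc 1 k, ψ m ω * φ m ω = φ (V (k + 1) ω) ω := by
        have hterm : ∀ m ∈ Finset.Icc 1 k,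
            ψ m ω * φ m ω = if V (k + 1) ω = m then φ m ω else 0 := by
          intro m _
          simp only [hψ, hε1, true_and]
          split <;> simp
        rw [Finset.sum_congr rfl hterm,
          Finset.sum_ite_eq (Finset.Icc 1 k) (V (k + 1) ω) (fun m => φ m ω),
          if_pos (Finset.mem_Icc.mpr ⟨hV.1, hV.2⟩)]
      rw [hsum]
      by_cases hhit : simonIdx ε V ω (V (k + 1) ω) = j
      · have : simonIdx ε V ω (k + 1) = j := by rw [hIdx']; exact hhit
        rw [if_pos this] at hNsucc
        rw [hNsucc]
        simp only [hφ, if_pos hhit, hΔf, hF1]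
        push_cast
        ring_nf
        rfl
      · have : ¬ (simonIdx ε V ω (k + 1) = j) := by rw [hIdx']; exact hhit
        rw [if_neg this, add_zero] at hNsucc
        rw [hNsucc]
        simp only [hφ, if_neg hhit, hF1]
        ring
  have hf2ae : f2 =ᵐ[P]
      fun ω => (F1 ω + ∑ m ∈ Finset.Icc 1 k, ψ m ω * φ m ω) / ((k : ℝ) + 1) :=
    hV1k.mono fun ω h => by
      show (c + (simonN ε V j (k + 1) ω : ℝ)) ^ γ / ((k : ℝ) + 1) = _
      rw [hdecomp ω h]
  -- independence
  have hIndep := simon_indep hεmeas hVmeas hindep k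
  have hψ_int_eq : ∀ m ∈ Finset.Icc 1 k, ∫ ω, ψ m ω ∂P = p / (k : ℝ) := by
    intro m hm'
    have hset : MeasurableSet {ω | ε (k + 1) ω = 1 ∧ V (k + 1) ω = m} := by
      have h := ((hεmeas (k + 1)) (measurableSet_singleton 1)).inter
        ((hVmeas (k + 1)) (measurableSet_singleton m))
      exact h
    have hψind : ψ m = Set.indicator {ω | ε (k + 1) ω = 1 ∧ V (k + 1) ω = m}
        (1 : Ω → ℝ) := by
      funext ω
      rw [Set.indicator_apply]
      rfl
    rw [hψind, integral_indicator_one hset, measureReal_def,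
      simon_pair_prob hεmeas hVmeas hindep hεlaw hVlaw hk hm']
    rw [ENNReal.toReal_mul, ENNReal.toReal_ofReal hp.1.le]
    rw [ENNReal.toReal_inv]
    simp [div_eq_mul_inv]
  -- integrability of products
  have hNΔmeas : Measurable[simonFiltration ε V k] (fun ω => Nf ω * Δf ω) :=
    hNmeas.mul hΔmeas
  have hNΔint : Integrable (fun ω => Nf ω * Δf ω) P := by
    refine bdd_integrable ((hNΔmeas.mono hm le_rfl).aestronglyMeasurable) (C := (k : ℝ) * B) ?_
    intro ω
    rw [abs_mul]
    exact mul_le_mul (by rw [abs_of_nonneg (hN0 ω)]; exact hNK ω) (hΔbdd ω)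
      (abs_nonneg _) (by linarith)
  have hηint : ∀ m, m ≤ k → Integrable (fun ω => ψ m ω * φ m ω) P := by
    intro m hmk
    refine bdd_integrable (((hψmeas m).mul ((hφmeas m hmk).mono hm le_rfl)).aestronglyMeasurable)
      (C := B) ?_
    intro ω
    rw [abs_mul]
    calc |ψ m ω| * |φ m ω| ≤ 1 * B :=
          mul_le_mul (hψbdd m ω) (hφbdd m ω) (abs_nonneg _) zero_le_one
      _ = B := one_mul B
  have hsum_φ : ∀ ω, ∑ m ∈ Finset.Icc 1 k, φ m ω = Nf ω * Δf ω := by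
    intro ω
    have hterm : ∀ m ∈ Finset.Icc 1 k,
        φ m ω = (if simonIdx ε V ω m = j then (1 : ℝ) else 0) * Δf ω := by
      intro m _
      simp only [hφ]
      split <;> simp
    rw [Finset.sum_congr rfl hterm, ← Finset.sum_mul, Finset.sum_boole]
    rfl
  -- the set-integral identity
  have hsetint : ∀ s : Set Ω, MeasurableSet[simonFiltration ε V k] s →
      ∫ ω in s, g ω ∂P = ∫ ω in s, f2 ω ∂P := by
    intro s hs
    have hs' : MeasurableSet s := hm s hs
    have hterm : ∀ m ∈ Finset.Icc 1 k,
        ∫ ω in s, ψ m ω * φ m ω ∂P = (p / (k : ℝ)) * ∫ ω in s, φ m ω ∂P := by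
      intro m hm'
      have hmk : m ≤ k := (Finset.mem_Icc.mp hm').2
      have hind : s.indicator (fun ω => ψ m ω * φ m ω)
          = fun ω => ψ m ω * s.indicator (φ m) ω := by
        funext ω
        by_cases hω : ω ∈ s <;> simp [Set.indicator_apply, hω]
      rw [← integral_indicator hs', hind]
      have hφs_meas : Measurable[simonFiltration ε V k] (s.indicator (φ m)) :=
        (hφmeas m hmk).indicator hs
      have hIF : IndepFun (ψ m) (s.indicator (φ m)) P :=
        (simon_indepFun hIndep hφs_meas (hψmeasG m)).symm
      have hφs_int : Integrable (s.indicator (φ m)) P := (hφint m hmk).indicator hs'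
      have hmul := hIF.integral_mul_eq_mul_integral (hψint m).aestronglyMeasurable hφs_int.aestronglyMeasurable
      rw [show (fun ω => ψ m ω * s.indicator (φ m) ω)
          = (ψ m) * (s.indicator (φ m)) from rfl, hmul]
      rw [hψ_int_eq m hm', integral_indicator hs']
    -- left side
    have hL : ∫ ω in s, g ω ∂P
        = (∫ ω in s, F1 ω ∂P + (p / (k : ℝ)) * ∫ ω in s, Nf ω * Δf ω ∂P) / ((k : ℝ) + 1) := by
      rw [hg]
      rw [integral_div]
      congr 1
      rw [integral_add (hF1int.integrableOn) ((hNΔint.const_mul _).integrableOn)]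
      congr 1
      exact integral_const_mul _ _
    -- right side
    have hR : ∫ ω in s, f2 ω ∂P
        = (∫ ω in s, F1 ω ∂P + (p / (k : ℝ)) * ∫ ω in s, Nf ω * Δf ω ∂P) / ((k : ℝ) + 1) := by
      rw [setIntegral_congr_ae hs' (hf2ae.mono fun ω h _ => h)]
      rw [integral_div]
      congr 1
      rw [integral_add (hF1int.integrableOn)
        ((integrable_finset_sum _ fun m hm' => hηint m (Finset.mem_Icc.mp hm').2).integrableOn)]
      congr 1
      rw [integral_finset_sum _ fun m hm' =>
        (hηint m (Finset.mem_Icc.mp hm').2).integrableOn]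
      rw [Finset.sum_congr rfl hterm, ← Finset.mul_sum]
      congr 1
      rw [← integral_finset_sum _ fun m hm' => (hφint m (Finset.mem_Icc.mp hm').2).integrableOn]
      refine setIntegral_congr_ae hs' (Filter.Eventually.of_forall fun ω _ => hsum_φ ω)
    rw [hL, hR]
  -- conclusion via conditional expectation characterisation
  have hgmeas : Measurable[simonFiltration ε V k] g :=
    (hF1meas.add (measurable_const.mul hNΔmeas)).div_const _
  have hgbdd : ∀ ω, |g ω| ≤ B + B := by
    intro ω
    have h2 : |p / (k : ℝ) * (Nf ω * Δf ω)| ≤ B := by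
      rw [abs_mul, abs_mul]
      have hpk : |p / (k : ℝ)| ≤ 1 / (k : ℝ) := by
        rw [abs_div, abs_of_nonneg hp.1.le,
          abs_of_nonneg (by linarith : (0:ℝ) ≤ (k:ℝ))]
        exact (div_le_div_iff_of_pos_right hK0).mpr hp.2.le
      have hNa : |Nf ω| ≤ (k : ℝ) := by rw [abs_of_nonneg (hN0 ω)]; exact hNK ω
      calc |p / (k:ℝ)| * (|Nf ω| * |Δf ω|) ≤ (1 / (k:ℝ)) * ((k:ℝ) * B) := by
            refine mul_le_mul hpk (mul_le_mul hNa (hΔbdd ω) (abs_nonneg _) (by linarith))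
              (by positivity) (by positivity)
        _ = B := by field_simp
    have h1 : |F1 ω + p / (k : ℝ) * (Nf ω * Δf ω)| ≤ B + B := by
      refine (abs_add_le _ _).trans ?_
      linarith [hF1bdd ω, h2]
    rw [hg, abs_div]
    refine le_trans (div_le_self ?_ ?_) ?_
    · exact abs_nonneg _
    · rw [abs_of_nonneg (by linarith : (0:ℝ) ≤ (k:ℝ) + 1)]; linarith
    · exact h1
  have hgint : Integrable g P :=
    bdd_integrable ((hgmeas.mono hm le_rfl).aestronglyMeasurable) hgbdd
  have hf2meas : Measurable f2 := by
    have hN' : Measurable (fun ω => (simonN ε V j (k + 1) ω : ℝ)) :=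
      measurable_from_top.comp
        ((measurable_simonN_F (le_refl (k+1))).mono (simonFiltration_le hεmeas hVmeas (k+1))
          le_rfl)
    exact (measurable_rpow_const' (measurable_const.add hN') γ).div_const _
  have hf2bdd : ∀ ω, |f2 ω| ≤ B := by
    intro ω
    have hN' : (simonN ε V j (k + 1) ω : ℝ) ≤ (k : ℝ) + 1 := by
      exact_mod_cast Nat.cast_le.mpr (simonN_le ε V j (k + 1) ω)
    have h0 : (0:ℝ) ≤ (simonN ε V j (k + 1) ω : ℝ) := Nat.cast_nonneg _
    rw [hf2, abs_div, abs_of_nonneg (Real.rpow_nonneg (by linarith) γ),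
      abs_of_nonneg (by linarith : (0:ℝ) ≤ (k:ℝ) + 1)]
    have hup : (c + (simonN ε V j (k + 1) ω : ℝ)) ^ γ ≤ (c + (k:ℝ) + 1) ^ γ :=
      Real.rpow_le_rpow (by linarith) (by linarith) (by linarith)
    calc (c + (simonN ε V j (k + 1) ω : ℝ)) ^ γ / ((k:ℝ) + 1) ≤ B / ((k:ℝ)+1) := by
          exact (div_le_div_iff_of_pos_right (by linarith)).mpr hup
      _ ≤ B := div_le_self hB0 (by linarith)
  have hf2int : Integrable f2 P := bdd_integrable (hf2meas.aestronglyMeasurable) hf2bdd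
  have hcond : g =ᵐ[P] P[f2 | simonFiltration ε V k] :=
    ae_eq_condExp_of_forall_setIntegral_eq hm hf2int
      (fun s hs _ => hgint.integrableOn)
      (fun s hs _ => hsetint s hs)
      (StronglyMeasurable.aestronglyMeasurable hgmeas.stronglyMeasurable)
  have hgle : ∀ ω, g ω ≤ (c + Nf ω) ^ γ / (k : ℝ) := by
    intro ω
    have hkey' := hkey (Nf ω) (hN0 ω)
    have hΔeq : p * (Nf ω * Δf ω) ≤ F1 ω := by
      rw [hΔf, hF1]
      calc p * (Nf ω * ((c + Nf ω + 1) ^ γ - (c + Nf ω) ^ γ))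
          = p * Nf ω * ((c + Nf ω + 1) ^ γ - (c + Nf ω) ^ γ) := by ring
        _ ≤ (c + Nf ω) ^ γ := hkey'
    rw [hg, hF1, div_le_div_iff₀ (by linarith) hK0]
    have hexp : (p / (k:ℝ) * (Nf ω * Δf ω)) * (k:ℝ) = p * (Nf ω * Δf ω) := by
      field_simp
    have hF1' : F1 ω = (c + Nf ω) ^ γ := rfl
    nlinarith [hΔeq, hexp]
  show P[f2 | simonFiltration ε V k] ≤ᵐ[P] fun ω => (c + Nf ω) ^ γ / (k : ℝ)
  filter_upwards [hcond] with ω hω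
  rw [← hω]
  exact hgle ω

end Main


/-- In Simon's reinforcement model with memory parameter `p ∈ (0,1)`: for every
`γ ∈ (1, 1/p)` there is a constant `c > 0` such that for every `j ≥ 1` the process
`((c + N_j(k))^γ / k)_{k ≥ j}` is a supermartingale for the filtration
`F_k = σ(ε_i, V_i : 2 ≤ i ≤ k)` (it is adapted, integrable, and decreases in conditional
expectation); consequently `E[(c + N_j(n))^γ] ≤ (c+1)^γ·n/j` for all `n ≥ j`. -/
theorem simon_counting_supermartingale
    {Ω : Type*} [MeasurableSpace Ω] (P : Measure Ω) [IsProbabilityMeasure P]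
    (p : ℝ) (hp : p ∈ Set.Ioo (0 : ℝ) 1)
    (ε V : ℕ → Ω → ℕ) (hεmeas : ∀ i, Measurable (ε i)) (hVmeas : ∀ i, Measurable (V i))
    (hε1 : ∀ ω, ε 1 ω = 0) (hεval : ∀ i ω, ε i ω ≤ 1)
    (hεlaw : ∀ i, 2 ≤ i → P {ω | ε i ω = 1} = ENNReal.ofReal p)
    (hVlaw : ∀ i, 2 ≤ i → ∀ j ∈ Finset.Icc 1 (i - 1),
      P {ω | V i ω = j} = ((i - 1 : ℕ) : ℝ≥0∞)⁻¹)
    (hindep : iIndepFun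
      (fun (q : ℕ × Bool) ω => if q.2 then ε q.1 ω else V q.1 ω) P)
    (γ : ℝ) (hγ : γ ∈ Set.Ioo 1 (1 / p)) :
    ∃ c : ℝ, 0 < c ∧ ∀ j : ℕ, 1 ≤ j →
      ((∀ k, j ≤ k →
          StronglyMeasurable[simonFiltration ε V k]
            (fun ω => (c + (simonN ε V j k ω : ℝ)) ^ γ / (k : ℝ))) ∧
        (∀ k, j ≤ k →
          Integrable (fun ω => (c + (simonN ε V j k ω : ℝ)) ^ γ / (k : ℝ)) P) ∧
        (∀ k, j ≤ k →
          P[(fun ω => (c + (simonN ε V j (k + 1) ω : ℝ)) ^ γ / ((k : ℝ) + 1))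
              | simonFiltration ε V k]
            ≤ᵐ[P] fun ω => (c + (simonN ε V j k ω : ℝ)) ^ γ / (k : ℝ))) ∧
      ∀ n : ℕ, j ≤ n →
        ∫ ω, (c + (simonN ε V j n ω : ℝ)) ^ γ ∂P ≤ (c + 1) ^ γ * (n : ℝ) / (j : ℝ) := by
  have hγ1 : 1 < γ := hγ.1
  have hpγ : p * γ < 1 := by
    have := (lt_div_iff₀ hp.1).mp hγ.2
    linarith
  obtain ⟨c, hc, hkey⟩ := simon_key_ineq hp.1 hγ1 hpγ
  refine ⟨c, hc, fun j hj => ?_⟩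
  -- basic measurability / integrability for each k ≥ j
  have hSM : ∀ k, j ≤ k →
      StronglyMeasurable[simonFiltration ε V k]
        (fun ω => (c + (simonN ε V j k ω : ℝ)) ^ γ / (k : ℝ)) := by
    intro k hk
    have hN : Measurable[simonFiltration ε V k] (fun ω => (simonN ε V j k ω : ℝ)) :=
      measurable_from_top.comp (measurable_simonN_F le_rfl)
    exact ((measurable_rpow_const' (measurable_const.add hN) γ).div_const _).stronglyMeasurable
  have hInt : ∀ k, j ≤ k →
      Integrable (fun ω => (c + (simonN ε V j k ω : ℝ)) ^ γ / (k : ℝ)) P := by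
    intro k hk
    have hk1 : 1 ≤ k := le_trans hj hk
    have hK1 : (1:ℝ) ≤ (k:ℝ) := by exact_mod_cast hk1
    refine bdd_integrable (((hSM k hk).measurable.mono
      (simonFiltration_le hεmeas hVmeas k) le_rfl).aestronglyMeasurable)
      (C := (c + (k:ℝ)) ^ γ) ?_
    intro ω
    have hN0 : (0:ℝ) ≤ (simonN ε V j k ω : ℝ) := Nat.cast_nonneg _
    have hNK : (simonN ε V j k ω : ℝ) ≤ (k:ℝ) := Nat.cast_le.mpr (simonN_le ε V j k ω)
    have h1 : (c + (simonN ε V j k ω : ℝ)) ^ γ ≤ (c + (k:ℝ)) ^ γ :=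
      Real.rpow_le_rpow (by linarith) (by linarith) (by linarith)
    have h0 : (0:ℝ) ≤ (c + (simonN ε V j k ω : ℝ)) ^ γ := Real.rpow_nonneg (by linarith) _
    rw [abs_div, abs_of_nonneg h0, abs_of_nonneg (by linarith : (0:ℝ) ≤ (k:ℝ))]
    calc (c + (simonN ε V j k ω : ℝ)) ^ γ / (k:ℝ) ≤ (c + (k:ℝ)) ^ γ / (k:ℝ) :=
          (div_le_div_iff_of_pos_right (by linarith)).mpr h1
      _ ≤ (c + (k:ℝ)) ^ γ := div_le_self (Real.rpow_nonneg (by linarith) _) hK1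
  have hCond : ∀ k, j ≤ k →
      P[(fun ω => (c + (simonN ε V j (k + 1) ω : ℝ)) ^ γ / ((k : ℝ) + 1))
          | simonFiltration ε V k]
        ≤ᵐ[P] fun ω => (c + (simonN ε V j k ω : ℝ)) ^ γ / (k : ℝ) := fun k hk =>
    simon_step hεmeas hVmeas hεval hp hεlaw hVlaw hindep hγ1 hc hkey hj hk
  refine ⟨⟨hSM, hInt, hCond⟩, ?_⟩
  -- the expectation bound
  have hj1 : (0:ℝ) < (j:ℝ) := by exact_mod_cast hj
  have hchain : ∀ n, j ≤ n →
      ∫ ω, (c + (simonN ε V j n ω : ℝ)) ^ γ / (n : ℝ) ∂P ≤ (c + 1) ^ γ / (j : ℝ) := by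
    intro n hn
    induction n, hn using Nat.le_induction with
    | base =>
      have hptw : ∀ ω, (c + (simonN ε V j j ω : ℝ)) ^ γ / (j : ℝ) ≤ (c + 1) ^ γ / (j : ℝ) := by
        intro ω
        have hN1 : (simonN ε V j j ω : ℝ) ≤ 1 := by
          exact_mod_cast Nat.cast_le.mpr (simonN_self_le ε V j ω)
        have hN0 : (0:ℝ) ≤ (simonN ε V j j ω : ℝ) := Nat.cast_nonneg _
        refine (div_le_div_iff_of_pos_right hj1).mpr ?_
        exact Real.rpow_le_rpow (by linarith) (by linarith) (by linarith)
      calc ∫ ω, (c + (simonN ε V j j ω : ℝ)) ^ γ / (j : ℝ) ∂P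
          ≤ ∫ _ω, (c + 1) ^ γ / (j : ℝ) ∂P :=
            integral_mono (hInt j le_rfl) (integrable_const _) hptw
        _ = (c + 1) ^ γ / (j : ℝ) := by simp
    | succ n hn ih =>
      have hm : simonFiltration ε V n ≤ ‹MeasurableSpace Ω› :=
        simonFiltration_le hεmeas hVmeas n
      have hcast : (fun ω => (c + (simonN ε V j (n + 1) ω : ℝ)) ^ γ / ((n + 1 : ℕ) : ℝ))
          = fun ω => (c + (simonN ε V j (n + 1) ω : ℝ)) ^ γ / ((n : ℝ) + 1) := by
        funext ω; push_cast; ring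
      rw [hcast]
      calc ∫ ω, (c + (simonN ε V j (n + 1) ω : ℝ)) ^ γ / ((n : ℝ) + 1) ∂P
          = ∫ ω, (P[(fun ω => (c + (simonN ε V j (n + 1) ω : ℝ)) ^ γ / ((n : ℝ) + 1))
              | simonFiltration ε V n]) ω ∂P := (integral_condExp hm).symm
        _ ≤ ∫ ω, (c + (simonN ε V j n ω : ℝ)) ^ γ / (n : ℝ) ∂P :=
            integral_mono_ae integrable_condExp (hInt n hn) (hCond n hn)
        _ ≤ (c + 1) ^ γ / (j : ℝ) := ih
  intro n hn
  have hn1 : (0:ℝ) < (n:ℝ) := by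
    have : 1 ≤ n := le_trans hj hn
    exact_mod_cast this
  have h := hchain n hn
  rw [show (fun ω => (c + (simonN ε V j n ω : ℝ)) ^ γ / (n : ℝ))
      = fun ω => ((c + (simonN ε V j n ω : ℝ)) ^ γ) / (n : ℝ) from rfl] at h
  rw [integral_div] at h
  rw [div_le_div_iff₀ hn1 hj1] at h
  rw [le_div_iff₀ hj1]
  exact h
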